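/- Let α ∈ [0,2] and let B : (−1,1) → [0,∞) be integrable. For a characteristic function φ define G(φ)(ξ) := ∫_{S²} B(ξ·σ/|ξ|) φ(ξ⁺) φ(ξ⁻) dσ. Then for all φ, ψ ∈ K^α and all ξ ∈ ℝ³ one has |G(φ)(ξ) − G(ψ)(ξ)| ≤ γ_α ‖φ − ψ‖_α |ξ|^α. -/

import Mathlib

open MeasureTheory Real Filter Topology Metric
open scoped ENNReal NNReal

noncomputable section

/-- ℝ³ as a Euclidean space. -/
abbrev E3 := EuclideanSpace ℝ (Fin 3)

/-- The unit sphere S² in ℝ³. -/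
abbrev S2 := Metric.sphere (0 : E3) 1

/-- The surface measure on the unit sphere S² (total mass 4π). -/
def sphMeasure : Measure S2 := (volume : Measure E3).toSphere

/-- ξ⁺ = (ξ + |ξ|σ)/2. -/
def xiP (ξ : E3) (σ : S2) : E3 := (2 : ℝ)⁻¹ • (ξ + ‖ξ‖ • (σ : E3))

/-- ξ⁻ = (ξ − |ξ|σ)/2. -/
def xiM (ξ : E3) (σ : S2) : E3 := (2 : ℝ)⁻¹ • (ξ - ‖ξ‖ • (σ : E3))

/-- The kernel factor B(ξ·σ/|ξ|). -/
def kern (B : ℝ → ℝ) (ξ : E3) (σ : S2) : ℝ := B ((inner ℝ ξ (σ : E3) : ℝ) / ‖ξ‖)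

/-- φ is a characteristic function: the Fourier transform of a Borel probability
measure on ℝ³, i.e. φ(ξ) = ∫ exp(−i v·ξ) dμ(v). -/
def IsCharFun (φ : E3 → ℂ) : Prop :=
  ∃ μ : Measure E3, IsProbabilityMeasure μ ∧
    ∀ ξ : E3, φ ξ = ∫ v, Complex.exp (-(Complex.I * ((inner ℝ v ξ : ℝ) : ℂ))) ∂μ

/-- ‖φ − ψ‖_α = sup_{ξ ≠ 0} |φ(ξ) − ψ(ξ)|/|ξ|^α, as a value in [0,∞]. -/
def dAlpha (α : ℝ) (φ ψ : E3 → ℂ) : ℝ≥0∞ :=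
  ⨆ (ξ : E3) (_ : ξ ≠ 0), (‖φ ξ - ψ ξ‖₊ : ℝ≥0∞) / (‖ξ‖₊ : ℝ≥0∞) ^ α

/-- Membership in the space K^α: a characteristic function with ‖φ−1‖_α < ∞. -/
def memK (α : ℝ) (φ : E3 → ℂ) : Prop := IsCharFun φ ∧ dAlpha α φ 1 ≠ ⊤

/-- γ_α = 2π ∫_{−1}^{1} B(s) [((1+s)/2)^{α/2} + ((1−s)/2)^{α/2}] ds. -/
def gammaA (B : ℝ → ℝ) (α : ℝ) : ℝ :=
  2 * π * ∫ s in Set.Ioo (-1 : ℝ) 1, B s * (((1+s)/2) ^ (α/2) + ((1-s)/2) ^ (α/2))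

/-- The gain operator G(φ)(ξ) = ∫_{S²} B(ξ·σ/|ξ|) φ(ξ⁺) φ(ξ⁻) dσ. -/
def Gop (B : ℝ → ℝ) (φ : E3 → ℂ) (ξ : E3) : ℂ :=
  ∫ σ : S2, (kern B ξ σ : ℂ) * φ (xiP ξ σ) * φ (xiM ξ σ) ∂sphMeasure

/-!
Since |φ|, |ψ| ≤ 1, the integrands of G(φ)(ξ) and G(ψ)(ξ) differ by at most
B(s) ‖φ − ψ‖_α (|ξ⁺|^α + |ξ⁻|^α), where s = ξ·σ/|ξ| and |ξ^±|² = |ξ|² (1 ± s)/2.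
The bound depends on σ only through s, and by Archimedes' hat-box theorem the image of the
surface measure under σ ↦ u·σ (|u| = 1) is 2π times Lebesgue measure on (−1, 1); integrating
gives γ_α ‖φ − ψ‖_α |ξ|^α.

Archimedes' theorem follows from the volume 2π(1 + t)/3 of the cone {|x| < 1, u·x ≤ t|x|}.
In coordinates x = (z, v) ∈ ℝ × ℝ² along u, the image of planar Lebesgue measure under |v|² is
π times Lebesgue measure on [0, ∞), and in the variable q = z² + |v|² the cone becomes
{z² ≤ q < 1, z ≤ t√q}, whose slices at fixed q are the intervals [−√q, t√q].
-/

open Set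
open scoped RealInnerProductSpace Pointwise

lemma IsCharFun.exists_eq_charFun_neg {φ : E3 → ℂ} (h : IsCharFun φ) :
    ∃ μ : Measure E3, IsProbabilityMeasure μ ∧ ∀ ξ, φ ξ = charFun μ (-ξ) := by
  obtain ⟨μ, hμ, hφ⟩ := h
  refine ⟨μ, hμ, fun ξ => ?_⟩
  rw [hφ, charFun_apply]
  congr with v
  rw [inner_neg_right, Complex.ofReal_neg]
  ring_nf

lemma IsCharFun.norm_le_one {φ : E3 → ℂ} (h : IsCharFun φ) (ξ : E3) : ‖φ ξ‖ ≤ 1 := by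
  obtain ⟨μ, _, hφ⟩ := h.exists_eq_charFun_neg
  exact hφ ξ ▸ norm_charFun_le_one _

lemma IsCharFun.apply_zero {φ : E3 → ℂ} (h : IsCharFun φ) : φ 0 = 1 := by
  obtain ⟨μ, _, hφ⟩ := h.exists_eq_charFun_neg
  simp [hφ]

lemma IsCharFun.continuous {φ : E3 → ℂ} (h : IsCharFun φ) : Continuous φ := by
  obtain ⟨μ, _, hφ⟩ := h.exists_eq_charFun_neg
  rw [funext hφ]
  exact continuous_charFun.comp continuous_neg

lemma enorm_sub_le_dAlpha_mul {α : ℝ} {φ ψ : E3 → ℂ} (h0 : φ 0 = ψ 0) (η : E3) :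
    ‖φ η - ψ η‖ₑ ≤ dAlpha α φ ψ * ‖η‖ₑ ^ α := by
  rcases eq_or_ne η 0 with rfl | hη
  · simp [h0]
  have hη' : ‖η‖ₑ ≠ 0 := enorm_ne_zero.mpr hη
  rw [← ENNReal.div_le_iff (by simp [hη']) (by simp [hη'])]
  exact le_iSup₂ (f := fun ζ (_ : ζ ≠ 0) => (‖φ ζ - ψ ζ‖₊ : ℝ≥0∞) / (‖ζ‖₊ : ℝ≥0∞) ^ α) η hη

lemma volume_normSq_le_fin_two (c : ℝ) :
    volume {v : EuclideanSpace ℝ (Fin 2) | ‖v‖ ^ 2 ≤ c} = ENNReal.ofReal (π * c) := by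
  rcases lt_or_ge c 0 with hc | hc
  · have hempty : {v : EuclideanSpace ℝ (Fin 2) | ‖v‖ ^ 2 ≤ c} = ∅ :=
      eq_empty_of_forall_notMem fun v hv => (hc.trans_le (by positivity)).not_ge hv
    rw [hempty, measure_empty, ENNReal.ofReal_of_nonpos (by nlinarith [pi_pos])]
  · have hball : {v : EuclideanSpace ℝ (Fin 2) | ‖v‖ ^ 2 ≤ c} = closedBall 0 √c := by
      ext v
      rw [mem_ofPred_eq, mem_closedBall_zero_iff, Real.le_sqrt (norm_nonneg v) hc]
    rw [hball, EuclideanSpace.volume_closedBall_fin_two, ← ENNReal.ofReal_pow (sqrt_nonneg c),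
      Real.sq_sqrt hc, ← ENNReal.ofReal_mul hc, mul_comm]

lemma map_normSq_volume_fin_two :
    (volume : Measure (EuclideanSpace ℝ (Fin 2))).map (fun v => ‖v‖ ^ 2) =
      ENNReal.ofReal π • volume.restrict (Ici 0) := by
  rw [← Measure.restrict_congr_set Ioi_ae_eq_Ici]
  have hmeas : Measurable fun v : EuclideanSpace ℝ (Fin 2) => ‖v‖ ^ 2 := by fun_prop
  refine (Measure.ext_of_Ioc' _ _ (fun a b _ => ?_) fun a b hab => ?_).symm
  · rw [Measure.smul_apply, Measure.restrict_apply measurableSet_Ioc, smul_eq_mul]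
    exact ENNReal.mul_ne_top ENNReal.ofReal_ne_top
      (measure_lt_top_of_subset inter_subset_left measure_Ioc_lt_top.ne).ne
  have hpre : (fun v : EuclideanSpace ℝ (Fin 2) => ‖v‖ ^ 2) ⁻¹' Ioc a b =
      {v | ‖v‖ ^ 2 ≤ b} \ {v | ‖v‖ ^ 2 ≤ a} := by
    ext v
    simp [and_comm]
  rw [Measure.map_apply hmeas measurableSet_Ioc, hpre,
    measure_sdiff (ofPred_subset_ofPred.mpr fun v hv => hv.trans hab.le)
      (measurableSet_le hmeas measurable_const).nullMeasurableSet
      (by rw [volume_normSq_le_fin_two]; exact ENNReal.ofReal_ne_top),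
    volume_normSq_le_fin_two, volume_normSq_le_fin_two, Measure.smul_apply,
    Measure.restrict_apply measurableSet_Ioc, Ioc_inter_Ioi, Real.volume_Ioc, smul_eq_mul,
    ← ENNReal.ofReal_mul pi_pos.le]
  rcases le_total a 0 with ha | ha
  · rw [max_eq_right ha, sub_zero, ENNReal.ofReal_of_nonpos (p := π * a) (by nlinarith [pi_pos]),
      tsub_zero]
  · rw [max_eq_left ha, ← ENNReal.ofReal_sub _ (by positivity), mul_sub]

lemma lintegral_sqrt_Ico_zero_one :
    ∫⁻ q in Ico (0 : ℝ) 1, ENNReal.ofReal √q = ENNReal.ofReal (2 / 3) := by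
  rw [Measure.restrict_congr_set Ico_ae_eq_Ioc, ← ofReal_integral_eq_lintegral_ofReal
    (continuous_sqrt.integrableOn_Icc.mono_set Ioc_subset_Icc_self)
    (Eventually.of_forall fun q => sqrt_nonneg q), ← intervalIntegral.integral_of_le zero_le_one]
  simp_rw [sqrt_eq_rpow]
  rw [integral_rpow (Or.inl (by norm_num))]
  norm_num

lemma volume_parabolic_region {t : ℝ} (ht : t ≤ 1) :
    volume {p : ℝ × ℝ | p.1 ^ 2 ≤ p.2 ∧ p.2 < 1 ∧ p.1 ≤ t * √p.2} =
      ENNReal.ofReal (2 / 3 * (1 + t)) := by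
  have hmeas : MeasurableSet {p : ℝ × ℝ | p.1 ^ 2 ≤ p.2 ∧ p.2 < 1 ∧ p.1 ≤ t * √p.2} := by
    measurability
  have hslice : ∀ q : ℝ, volume {z : ℝ | z ^ 2 ≤ q ∧ q < 1 ∧ z ≤ t * √q} =
      (Ico 0 1).indicator (fun q => ENNReal.ofReal (1 + t) * ENNReal.ofReal √q) q := by
    intro q
    by_cases hq : q ∈ Ico 0 1
    · have hIcc : {z : ℝ | z ^ 2 ≤ q ∧ q < 1 ∧ z ≤ t * √q} = Icc (-√q) (t * √q) := by
        ext z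
        simp only [mem_ofPred_eq, mem_Icc, Real.sq_le hq.1, hq.2, true_and]
        have : t * √q ≤ √q := mul_le_of_le_one_left (sqrt_nonneg q) ht
        constructor
        · rintro ⟨⟨h1, -⟩, h2⟩; exact ⟨h1, h2⟩
        · rintro ⟨h1, h2⟩; exact ⟨⟨h1, h2.trans this⟩, h2⟩
      rw [indicator_of_mem hq, hIcc, Real.volume_Icc, ← ENNReal.ofReal_mul' (sqrt_nonneg q)]
      ring_nf
    · have hempty : {z : ℝ | z ^ 2 ≤ q ∧ q < 1 ∧ z ≤ t * √q} = ∅ := by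
        refine eq_empty_of_forall_notMem fun z ⟨h1, h2, _⟩ => hq ⟨?_, h2⟩
        exact (sq_nonneg z).trans h1
      rw [indicator_of_notMem hq, hempty, measure_empty]
  rw [Measure.volume_eq_prod, Measure.prod_apply_symm hmeas]
  simp_rw [preimage_ofPred_eq, hslice]
  rw [lintegral_indicator measurableSet_Ico, lintegral_const_mul' _ _ ENNReal.ofReal_ne_top,
    lintegral_sqrt_Ico_zero_one, ← ENNReal.ofReal_mul' (by norm_num), mul_comm]

lemma EuclideanSpace.measurePreserving_fin_succ (n : ℕ) :
    MeasurePreserving (fun x : EuclideanSpace ℝ (Fin (n + 1)) =>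
      (x 0, WithLp.toLp 2 (fun i : Fin n => x i.succ))) :=
  ((MeasurePreserving.id volume).prod (PiLp.volume_preserving_toLp (Fin n))).comp
    ((volume_preserving_piFinSuccAbove (fun _ : Fin (n + 1) => ℝ) 0).comp
      (PiLp.volume_preserving_ofLp (Fin (n + 1))))

lemma EuclideanSpace.norm_sq_fin_succ {n : ℕ} (x : EuclideanSpace ℝ (Fin (n + 1))) :
    ‖x‖ ^ 2 = x 0 ^ 2 + ‖WithLp.toLp 2 (fun i : Fin n => x i.succ)‖ ^ 2 := by
  simp [EuclideanSpace.norm_sq_eq, Fin.sum_univ_succ]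

lemma norm_inv_norm_smul_self {E : Type*} [NormedAddCommGroup E] [NormedSpace ℝ E] {x : E}
    (hx : x ≠ 0) : ‖‖x‖⁻¹ • x‖ = 1 := by
  rw [norm_smul, norm_inv, norm_norm, inv_mul_cancel₀ (norm_ne_zero_iff.mpr hx)]

section InnerProductSpace

variable {F : Type*} [NormedAddCommGroup F] [InnerProductSpace ℝ F]

lemma abs_inner_div_norm_le_one (x : F) {y : F} (hy : ‖y‖ = 1) : |⟪x, y⟫ / ‖x‖| ≤ 1 := by
  rw [abs_div, abs_norm]
  exact div_le_one_of_le₀ ((abs_real_inner_le_norm x y).trans (by rw [hy, mul_one]))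
    (norm_nonneg x)

lemma norm_sq_half_add_norm_smul (x : F) {y : F} (hy : ‖y‖ = 1) :
    ‖(2 : ℝ)⁻¹ • (x + ‖x‖ • y)‖ ^ 2 = ‖x‖ ^ 2 * ((1 + ⟪x, y⟫ / ‖x‖) / 2) := by
  rcases eq_or_ne x 0 with rfl | hx
  · simp
  rw [norm_smul, mul_pow, norm_add_sq_real, real_inner_smul_right, norm_smul, norm_norm, hy]
  field_simp
  norm_num
  ring

lemma enorm_half_add_norm_smul_rpow (x : F) {y : F} (hy : ‖y‖ = 1) {α : ℝ} (hα : 0 ≤ α) :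
    ‖(2 : ℝ)⁻¹ • (x + ‖x‖ • y)‖ₑ ^ α =
      ‖x‖ₑ ^ α * ENNReal.ofReal (((1 + ⟪x, y⟫ / ‖x‖) / 2) ^ (α / 2)) := by
  have hs : 0 ≤ (1 + ⟪x, y⟫ / ‖x‖) / 2 := by
    linarith [neg_abs_le (⟪x, y⟫ / ‖x‖), abs_inner_div_norm_le_one x hy]
  have hsq (v : F) : ‖v‖ ^ α = (‖v‖ ^ 2) ^ (α / 2) := by
    rw [← Real.rpow_natCast, ← Real.rpow_mul (norm_nonneg v)]
    ring_nf
  rw [← ofReal_norm, ← ofReal_norm, ENNReal.ofReal_rpow_of_nonneg (norm_nonneg _) hα,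
    ENNReal.ofReal_rpow_of_nonneg (norm_nonneg _) hα, ← ENNReal.ofReal_mul (by positivity),
    hsq, hsq x, norm_sq_half_add_norm_smul x hy, Real.mul_rpow (by positivity) hs]

lemma inner_le_one_of_mem_sphere {u : F} (hu : ‖u‖ = 1) (σ : sphere (0 : F) 1) :
    ⟪u, (σ : F)⟫ ≤ 1 :=
  (real_inner_le_norm _ _).trans (by simp [hu])

lemma Ioo_smul_inner_le_eq (u : F) (t : ℝ) :
    Ioo (0 : ℝ) 1 • (Subtype.val '' {σ : sphere (0 : F) 1 | ⟪u, (σ : F)⟫ ≤ t}) =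
      {x : F | ‖x‖ < 1 ∧ ⟪u, x⟫ ≤ t * ‖x‖} \ {0} := by
  ext x
  constructor
  · rintro ⟨r, ⟨hr0, hr1⟩, _, ⟨σ, hσ, rfl⟩, rfl⟩
    dsimp only
    have hrσ : ‖r • (σ : F)‖ = r := by simp [norm_smul, abs_of_pos hr0]
    refine ⟨⟨by rwa [hrσ], ?_⟩, ?_⟩
    · rw [mem_ofPred_eq] at hσ
      rw [real_inner_smul_right, hrσ, mul_comm t]
      exact mul_le_mul_of_nonneg_left hσ hr0.le
    · simpa [← norm_eq_zero, hrσ] using hr0.ne'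
  · rintro ⟨⟨hx1, hxt⟩, hx0⟩
    have hx : 0 < ‖x‖ := norm_pos_iff.mpr hx0
    refine ⟨‖x‖, ⟨hx, hx1⟩, ‖x‖⁻¹ • x, ⟨⟨‖x‖⁻¹ • x, by simp [norm_smul, hx.ne']⟩, ?_, rfl⟩,
      smul_inv_smul₀ hx.ne' x⟩
    rw [mem_ofPred_eq, real_inner_smul_right, inv_mul_le_iff₀ hx, mul_comm]
    exact hxt

variable [FiniteDimensional ℝ F] [MeasurableSpace F] [BorelSpace F]

lemma exists_measurePreserving_inner_prod {n : ℕ}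
    (hF : Module.finrank ℝ F = n + 1) {u : F} (hu : ‖u‖ = 1) :
    ∃ f : F → ℝ × EuclideanSpace ℝ (Fin n), MeasurePreserving f ∧
      ∀ x, (f x).1 = ⟪u, x⟫ ∧ ‖x‖ ^ 2 = (f x).1 ^ 2 + ‖(f x).2‖ ^ 2 := by
  have horth : Orthonormal ℝ (({0} : Set (Fin (n + 1))).domRestrict fun _ => u) :=
    ⟨fun _ => hu, fun i j hij => (hij (Subtype.ext (i.2.trans j.2.symm))).elim⟩
  obtain ⟨b, hb⟩ := horth.exists_orthonormalBasis_extension_of_card_eq (by simpa using hF)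
  refine ⟨_, (EuclideanSpace.measurePreserving_fin_succ n).comp b.measurePreserving_repr,
    fun x => ⟨?_, ?_⟩⟩
  · simp [b.repr_apply_apply, hb 0 rfl]
  · rw [Function.comp_apply, ← EuclideanSpace.norm_sq_fin_succ, b.repr.norm_map]

lemma volume_cone_inter_ball (hF : Module.finrank ℝ F = 3)
    {u : F} (hu : ‖u‖ = 1) {t : ℝ} (ht : t ≤ 1) :
    volume {x : F | ‖x‖ < 1 ∧ ⟪u, x⟫ ≤ t * ‖x‖} = ENNReal.ofReal (2 * π / 3 * (1 + t)) := by
  obtain ⟨f, hf, hfx⟩ := exists_measurePreserving_inner_prod hF hu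
  set C : Set (ℝ × EuclideanSpace ℝ (Fin 2)) :=
    {p | p.1 ^ 2 + ‖p.2‖ ^ 2 < 1 ∧ p.1 ≤ t * √(p.1 ^ 2 + ‖p.2‖ ^ 2)}
  set Q : Set (ℝ × ℝ) := {p | p.1 ^ 2 ≤ p.2 ∧ p.2 < 1 ∧ p.1 ≤ t * √p.2}
  have hC : MeasurableSet C := by measurability
  have hQ : MeasurableSet Q := by measurability
  have hpre : {x : F | ‖x‖ < 1 ∧ ⟪u, x⟫ ≤ t * ‖x‖} = f ⁻¹' C := by
    ext x
    obtain ⟨h1, h2⟩ := hfx x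
    rw [mem_preimage, mem_ofPred_eq, mem_ofPred_eq, ← h2, ← h1, sqrt_sq (norm_nonneg x),
      sq_lt_one_iff₀ (norm_nonneg x)]
  have hslice (z : ℝ) :
      volume (Prod.mk z ⁻¹' C) = ENNReal.ofReal π * volume (Prod.mk z ⁻¹' Q) := by
    set A : Set ℝ := {w | z ^ 2 + w < 1 ∧ z ≤ t * √(z ^ 2 + w)}
    have hA : MeasurableSet A := by measurability
    have htrans : A ∩ Ici 0 = (fun w => z ^ 2 + w) ⁻¹' (Prod.mk z ⁻¹' Q) := by
      ext w
      simp only [A, Q, mem_inter_iff, mem_ofPred_eq, mem_Ici, mem_preimage,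
        le_add_iff_nonneg_right]
      tauto
    rw [show Prod.mk z ⁻¹' C = (fun v => ‖v‖ ^ 2) ⁻¹' A from rfl,
      ← Measure.map_apply (by fun_prop) hA, map_normSq_volume_fin_two, Measure.smul_apply,
      Measure.restrict_apply hA, htrans, measure_preimage_add, smul_eq_mul]
  rw [hpre, hf.measure_preimage hC.nullMeasurableSet, Measure.volume_eq_prod,
    Measure.prod_apply hC]
  simp_rw [hslice]
  rw [lintegral_const_mul' _ _ ENNReal.ofReal_ne_top, ← Measure.prod_apply hQ,
    ← Measure.volume_eq_prod, (volume_parabolic_region ht : volume Q = _),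
    ← ENNReal.ofReal_mul pi_pos.le]
  ring_nf

lemma toSphere_setOf_inner_le (hF : Module.finrank ℝ F = 3)
    {u : F} (hu : ‖u‖ = 1) {t : ℝ} (ht : t ≤ 1) :
    (volume : Measure F).toSphere {σ | ⟪u, (σ : F)⟫ ≤ t} = ENNReal.ofReal (2 * π * (1 + t)) := by
  have hmeas : MeasurableSet {σ : sphere (0 : F) 1 | ⟪u, (σ : F)⟫ ≤ t} :=
    measurableSet_le (by fun_prop) measurable_const
  have : Nontrivial F := Module.nontrivial_of_finrank_pos (R := ℝ) (by omega)
  rw [Measure.toSphere_apply' _ hmeas, Ioo_smul_inner_le_eq,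
    measure_sdiff_null (measure_singleton 0), volume_cone_inter_ball hF hu ht, hF,
    show ((3 : ℕ) : ℝ≥0∞) = ENNReal.ofReal 3 by simp,
    ← ENNReal.ofReal_mul (by norm_num)]
  ring_nf

lemma map_inner_toSphere (hF : Module.finrank ℝ F = 3)
    {u : F} (hu : ‖u‖ = 1) :
    (volume : Measure F).toSphere.map (fun σ : sphere (0 : F) 1 => ⟪u, (σ : F)⟫) =
      ENNReal.ofReal (2 * π) • volume.restrict (Ioo (-1) 1) := by
  rw [Measure.restrict_congr_set Ioo_ae_eq_Ioc]
  refine Measure.ext_of_Iic _ _ fun a => ?_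
  have hcap : (fun σ : sphere (0 : F) 1 => ⟪u, (σ : F)⟫) ⁻¹' Iic a =
      {σ : sphere (0 : F) 1 | ⟪u, (σ : F)⟫ ≤ min 1 a} := by
    ext σ
    simp [inner_le_one_of_mem_sphere hu σ]
  rw [Measure.map_apply (by fun_prop) measurableSet_Iic, hcap,
    toSphere_setOf_inner_le hF hu (min_le_left _ _),
    Measure.smul_apply, Measure.restrict_apply measurableSet_Iic, inter_comm, Ioc_inter_Iic,
    Real.volume_Ioc, smul_eq_mul, ← ENNReal.ofReal_mul (by positivity)]
  ring_nf

end InnerProductSpace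

lemma enorm_mul_sub_mul_le {R : Type*} [SeminormedRing R] {a b c d : R} (hb : ‖b‖ ≤ 1)
    (hc : ‖c‖ ≤ 1) : ‖a * b - c * d‖ₑ ≤ ‖a - c‖ₑ + ‖b - d‖ₑ := by
  have key : ‖a * b - c * d‖ ≤ ‖a - c‖ + ‖b - d‖ :=
    calc ‖a * b - c * d‖ = ‖(a - c) * b + c * (b - d)‖ := by noncomm_ring
      _ ≤ ‖a - c‖ * ‖b‖ + ‖c‖ * ‖b - d‖ :=
        (norm_add_le _ _).trans (add_le_add (norm_mul_le _ _) (norm_mul_le _ _))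
      _ ≤ ‖a - c‖ + ‖b - d‖ :=
        add_le_add (mul_le_of_le_one_right (norm_nonneg _) hb)
          (mul_le_of_le_one_left (norm_nonneg _) hc)
  simpa only [← ofReal_norm, ← ENNReal.ofReal_add (norm_nonneg _) (norm_nonneg _)] using
    ENNReal.ofReal_le_ofReal key

lemma map_inner_sphMeasure {u : E3} (hu : ‖u‖ = 1) :
    sphMeasure.map (fun σ : S2 => ⟪u, (σ : E3)⟫) =
      ENNReal.ofReal (2 * π) • volume.restrict (Ioo (-1) 1) :=
  map_inner_toSphere finrank_euclideanSpace_fin hu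

lemma lintegral_comp_inner_sphMeasure {u : E3} (hu : ‖u‖ = 1) {g : ℝ → ℝ≥0∞}
    (hg : AEMeasurable g (volume.restrict (Ioo (-1) 1))) :
    ∫⁻ σ, g ⟪u, (σ : E3)⟫ ∂sphMeasure = ENNReal.ofReal (2 * π) * ∫⁻ s in Ioo (-1) 1, g s := by
  rw [← lintegral_map' (by rw [map_inner_sphMeasure hu]; exact hg.smul_measure _)
    (by fun_prop), map_inner_sphMeasure hu, lintegral_smul_measure, smul_eq_mul]

lemma integrable_comp_inner_sphMeasure {u : E3} (hu : ‖u‖ = 1) {g : ℝ → ℝ}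
    (hg : IntegrableOn g (Ioo (-1) 1)) :
    Integrable (fun σ : S2 => g ⟪u, (σ : E3)⟫) sphMeasure := by
  have h := hg.smul_measure (c := ENNReal.ofReal (2 * π)) ENNReal.ofReal_ne_top
  rw [← map_inner_sphMeasure hu] at h
  exact h.comp_aemeasurable (by fun_prop)

-- `|ξ⁺|^α + |ξ⁻|^α = |ξ|^α * gainWeight α s` with `s = ξ·σ/|ξ|`.
def gainWeight (α s : ℝ) : ℝ := ((1 + s) / 2) ^ (α / 2) + ((1 - s) / 2) ^ (α / 2)

def gainIntegrand (B : ℝ → ℝ) (φ : E3 → ℂ) (ξ : E3) (σ : S2) : ℂ :=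
  (kern B ξ σ : ℂ) * φ (xiP ξ σ) * φ (xiM ξ σ)

lemma kern_eq_comp_inner (B : ℝ → ℝ) (ξ : E3) :
    kern B ξ = fun σ : S2 => B ⟪‖ξ‖⁻¹ • ξ, (σ : E3)⟫ := by
  ext σ
  rw [kern, real_inner_smul_left, div_eq_inv_mul]

lemma gainWeight_nonneg {α s : ℝ} (hs : s ∈ Icc (-1) 1) : 0 ≤ gainWeight α s :=
  add_nonneg (rpow_nonneg (by linarith [hs.1]) _) (rpow_nonneg (by linarith [hs.2]) _)

lemma gainWeight_le_two {α s : ℝ} (hα : 0 ≤ α) (hs : s ∈ Icc (-1) 1) : gainWeight α s ≤ 2 := by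
  have h₁ : ((1 + s) / 2) ^ (α / 2) ≤ 1 :=
    rpow_le_one (by linarith [hs.1]) (by linarith [hs.2]) (by positivity)
  have h₂ : ((1 - s) / 2) ^ (α / 2) ≤ 1 :=
    rpow_le_one (by linarith [hs.2]) (by linarith [hs.1]) (by positivity)
  rw [gainWeight]
  linarith

lemma enorm_gainIntegrand_sub_le {α : ℝ} (hα : 0 ≤ α) {B : ℝ → ℝ} {φ ψ : E3 → ℂ}
    (hφ : IsCharFun φ) (hψ : IsCharFun ψ) (ξ : E3) (σ : S2) :
    ‖gainIntegrand B φ ξ σ - gainIntegrand B ψ ξ σ‖ₑ ≤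
      dAlpha α φ ψ * ‖ξ‖ₑ ^ α *
        (‖kern B ξ σ‖ₑ * ENNReal.ofReal (gainWeight α (⟪ξ, (σ : E3)⟫ / ‖ξ‖))) := by
  have hσ : ‖(σ : E3)‖ = 1 := norm_eq_of_mem_sphere σ
  obtain ⟨hs₁, hs₂⟩ := abs_le.mp (abs_inner_div_norm_le_one ξ hσ)
  have hxiM : xiM ξ σ = (2 : ℝ)⁻¹ • (ξ + ‖ξ‖ • -(σ : E3)) := by
    rw [xiM, smul_neg, sub_eq_add_neg]
  have hD (η : E3) := enorm_sub_le_dAlpha_mul (α := α) (hφ.apply_zero.trans hψ.apply_zero.symm) η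
  calc ‖gainIntegrand B φ ξ σ - gainIntegrand B ψ ξ σ‖ₑ
      = ‖(kern B ξ σ : ℂ)‖ₑ *
          ‖φ (xiP ξ σ) * φ (xiM ξ σ) - ψ (xiP ξ σ) * ψ (xiM ξ σ)‖ₑ := by
        rw [← enorm_mul, gainIntegrand, gainIntegrand]
        ring_nf
    _ ≤ ‖kern B ξ σ‖ₑ * (dAlpha α φ ψ * ‖xiP ξ σ‖ₑ ^ α + dAlpha α φ ψ * ‖xiM ξ σ‖ₑ ^ α) := by
        rw [enorm_eq_nnnorm, Complex.nnnorm_real, ← enorm_eq_nnnorm]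
        gcongr
        exact (enorm_mul_sub_mul_le (hφ.norm_le_one _) (hψ.norm_le_one _)).trans
          (add_le_add (hD _) (hD _))
    _ = _ := by
        rw [xiP, hxiM, enorm_half_add_norm_smul_rpow _ hσ hα,
          enorm_half_add_norm_smul_rpow _ (by rwa [norm_neg]) hα, inner_neg_right, gainWeight,
          ENNReal.ofReal_add (rpow_nonneg (by linarith) _) (rpow_nonneg (by linarith) _), neg_div,
          ← sub_eq_add_neg]
        ring

lemma integrable_gainIntegrand {B : ℝ → ℝ} (hBint : IntegrableOn B (Ioo (-1) 1)) {φ : E3 → ℂ}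
    (hφ : IsCharFun φ) {ξ : E3} (hξ : ξ ≠ 0) : Integrable (gainIntegrand B φ ξ) sphMeasure := by
  have hk : Integrable (kern B ξ) sphMeasure := by
    rw [kern_eq_comp_inner]
    exact integrable_comp_inner_sphMeasure (norm_inv_norm_smul_self hξ) hBint
  have hP : Continuous fun σ : S2 => φ (xiP ξ σ) := hφ.continuous.comp (by unfold xiP; fun_prop)
  have hM : Continuous fun σ : S2 => φ (xiM ξ σ) := hφ.continuous.comp (by unfold xiM; fun_prop)
  exact (hk.ofReal.mul_bdd hP.aestronglyMeasurable (ae_of_all _ fun σ => hφ.norm_le_one _)).mul_bdd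
    hM.aestronglyMeasurable (ae_of_all _ fun σ => hφ.norm_le_one _)

-- `c` may be `∞`: it is pulled out on the interval side, where measurability is at hand.
lemma lintegral_const_mul_enorm_kern_mul_gainWeight {α : ℝ} (hα : 0 ≤ α) {B : ℝ → ℝ}
    (hBpos : ∀ s ∈ Ioo (-1 : ℝ) 1, 0 ≤ B s) (hBint : IntegrableOn B (Ioo (-1) 1)) {ξ : E3}
    (hξ : ξ ≠ 0) (c : ℝ≥0∞) :
    ∫⁻ σ, c * (‖kern B ξ σ‖ₑ * ENNReal.ofReal (gainWeight α (⟪ξ, (σ : E3)⟫ / ‖ξ‖))) ∂sphMeasure =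
      c * ENNReal.ofReal (gammaA B α) := by
  have hw : Measurable (gainWeight α) := by unfold gainWeight; fun_prop
  have hBw : IntegrableOn (fun s => B s * gainWeight α s) (Ioo (-1) 1) :=
    hBint.mul_bdd hw.aestronglyMeasurable ((ae_restrict_mem measurableSet_Ioo).mono fun s hs => by
      rw [Real.norm_of_nonneg (gainWeight_nonneg (Ioo_subset_Icc_self hs))]
      exact gainWeight_le_two hα (Ioo_subset_Icc_self hs))
  have hg : AEMeasurable (fun s => ‖B s‖ₑ * ENNReal.ofReal (gainWeight α s))
      (volume.restrict (Ioo (-1) 1)) :=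
    hBint.aemeasurable.enorm.mul hw.ennreal_ofReal.aemeasurable
  have hinner (σ : S2) : ⟪ξ, (σ : E3)⟫ / ‖ξ‖ = ⟪‖ξ‖⁻¹ • ξ, (σ : E3)⟫ := by
    rw [real_inner_smul_left, div_eq_inv_mul]
  simp_rw [kern_eq_comp_inner, hinner]
  rw [lintegral_comp_inner_sphMeasure (norm_inv_norm_smul_self hξ) (hg.const_mul c),
    lintegral_const_mul'' c hg, setLIntegral_congr_fun measurableSet_Ioo fun s hs => by
      rw [Real.enorm_of_nonneg (hBpos s hs), ← ENNReal.ofReal_mul (hBpos s hs)],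
    ← ofReal_integral_eq_lintegral_ofReal hBw ((ae_restrict_mem measurableSet_Ioo).mono
      fun s hs => mul_nonneg (hBpos s hs) (gainWeight_nonneg (Ioo_subset_Icc_self hs))),
    gammaA, ENNReal.ofReal_mul (p := 2 * π) (by positivity)]
  simp only [gainWeight]
  ring

lemma Gop_zero {B : ℝ → ℝ} {φ : E3 → ℂ} (hφ : IsCharFun φ) :
    Gop B φ 0 = ∫ σ, (kern B 0 σ : ℂ) ∂sphMeasure := by
  simp [Gop, xiP, xiM, hφ.apply_zero]

/-- For φ, ψ ∈ K^α and every ξ: |G(φ)(ξ) − G(ψ)(ξ)| ≤ γ_α ‖φ − ψ‖_α |ξ|^α. -/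
theorem Gop_lipschitz (α : ℝ) (hα : α ∈ Set.Icc (0 : ℝ) 2) (B : ℝ → ℝ)
    (hBpos : ∀ s ∈ Set.Ioo (-1 : ℝ) 1, 0 ≤ B s)
    (hBint : IntegrableOn B (Set.Ioo (-1 : ℝ) 1))
    (φ ψ : E3 → ℂ) (hφ : memK α φ) (hψ : memK α ψ) (ξ : E3) :
    (‖Gop B φ ξ - Gop B ψ ξ‖₊ : ℝ≥0∞) ≤
      ENNReal.ofReal (gammaA B α) * dAlpha α φ ψ * (‖ξ‖₊ : ℝ≥0∞) ^ α := by
  rcases eq_or_ne ξ 0 with rfl | hξ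
  · simp [Gop_zero hφ.1, Gop_zero hψ.1]
  simp only [← enorm_eq_nnnorm]
  calc ‖Gop B φ ξ - Gop B ψ ξ‖ₑ
      = ‖∫ σ, (gainIntegrand B φ ξ σ - gainIntegrand B ψ ξ σ) ∂sphMeasure‖ₑ := by
        rw [integral_sub (integrable_gainIntegrand hBint hφ.1 hξ)
          (integrable_gainIntegrand hBint hψ.1 hξ)]
        rfl
    _ ≤ ∫⁻ σ, ‖gainIntegrand B φ ξ σ - gainIntegrand B ψ ξ σ‖ₑ ∂sphMeasure :=
        enorm_integral_le_lintegral_enorm _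
    _ ≤ ∫⁻ σ, dAlpha α φ ψ * ‖ξ‖ₑ ^ α *
          (‖kern B ξ σ‖ₑ * ENNReal.ofReal (gainWeight α (⟪ξ, (σ : E3)⟫ / ‖ξ‖))) ∂sphMeasure :=
        lintegral_mono fun σ => enorm_gainIntegrand_sub_le hα.1 hφ.1 hψ.1 ξ σ
    _ = ENNReal.ofReal (gammaA B α) * dAlpha α φ ψ * ‖ξ‖ₑ ^ α := by
        rw [lintegral_const_mul_enorm_kern_mul_gainWeight hα.1 hBpos hBint hξ]
        ring
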